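/- Every decomposable cyclic group code C ⊆ G^n is isomorphic as a group code to a direct sum of indecomposable cyclic group codes. -/

import Mathlib

section GroupCodes
variable {G : Type*} [Group G] [DecidableEq G]

/-- The canonical splitting homomorphism `G^{n+m} → G^n × G^m`. -/
def splitHom (G : Type*) [Group G] (n m : ℕ) :
    (Fin (n + m) → G) →* (Fin n → G) × (Fin m → G) where
  toFun z := (fun i => z (Fin.castAdd m i), fun j => z (Fin.natAdd n j))
  map_one' := rfl
  map_mul' _ _ := rfl

/-- Direct sum of two group codes, as a subgroup of `G^{n+m}`. -/
def gcSum {n m : ℕ} (C : Subgroup (Fin n → G)) (D : Subgroup (Fin m → G)) :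
    Subgroup (Fin (n + m) → G) :=
  (C.prod D).comap (splitHom G n m)

/-- `φ` is a morphism of group codes from `C` to `D`. -/
def IsGroupCodeHom {n m : ℕ} (C : Subgroup (Fin n → G)) (D : Subgroup (Fin m → G))
    (φ : (Fin n → G) → (Fin m → G)) : Prop :=
  (∀ x y : Fin n → G, φ (x * y) = φ x * φ y) ∧ (∀ x ∈ C, φ x ∈ D) ∧
    ∀ x y : Fin n → G, hammingDist (φ x) (φ y) ≤ hammingDist x y

/-- The group codes `C` and `D` are isomorphic as group codes. -/
def GroupCodeIso {n m : ℕ} (C : Subgroup (Fin n → G)) (D : Subgroup (Fin m → G)) : Prop :=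
  ∃ (φ : (Fin n → G) → (Fin m → G)) (ψ : (Fin m → G) → (Fin n → G)),
    IsGroupCodeHom C D φ ∧ IsGroupCodeHom D C ψ ∧
      Function.LeftInverse ψ φ ∧ Function.RightInverse ψ φ

/-- A group code is decomposable if it is isomorphic, as a group code, to a direct sum
of two group codes of positive lengths. -/
def GCDecomposable {n : ℕ} (C : Subgroup (Fin n → G)) : Prop :=
  ∃ (p q : ℕ) (D : Subgroup (Fin p → G)) (E : Subgroup (Fin q → G)),
    0 < p ∧ 0 < q ∧ GroupCodeIso C (gcSum D E)

/-- Reindexing homomorphism along an equality of lengths. -/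
def reindexHom (G : Type*) [Group G] {a b : ℕ} (h : a = b) :
    (Fin b → G) →* (Fin a → G) where
  toFun z := fun i => z (Fin.cast h i)
  map_one' := rfl
  map_mul' _ _ := rfl

/-- Direct sum of a finite family of group codes (of possibly different lengths). -/
def gcMultiSum : {k : ℕ} → {len : Fin k → ℕ} →
    (∀ i, Subgroup (Fin (len i) → G)) → Subgroup (Fin (∑ i, len i) → G)
  | 0, _, _ => ⊤
  | k + 1, len, D =>
    (gcSum (D 0) (gcMultiSum (fun i => D i.succ))).comap
      (reindexHom G (a := len 0 + ∑ i : Fin k, len i.succ) (b := ∑ i, len i)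
        (Fin.sum_univ_succ len).symm)

/-- Direct sum of `α` copies of the group code `D`. -/
def gcPow {m : ℕ} (D : Subgroup (Fin m → G)) (α : ℕ) :
    Subgroup (Fin (∑ _ : Fin α, m) → G) :=
  gcMultiSum (fun _ : Fin α => D)

/-- The group of group-code automorphisms of a group code `C ⊆ G^n`:  group automorphisms
of `G^n` that preserve the Hamming distance and map `C` onto `C`. -/
def AutGC {n : ℕ} (C : Subgroup (Fin n → G)) : Subgroup (MulAut (Fin n → G)) where
  carrier := {φ | (∀ x y, hammingDist (φ x) (φ y) = hammingDist x y) ∧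
    ∀ x, φ x ∈ C ↔ x ∈ C}
  one_mem' := ⟨fun _ _ => rfl, fun _ => Iff.rfl⟩
  mul_mem' := by
    rintro φ ψ ⟨hφ1, hφ2⟩ ⟨hψ1, hψ2⟩
    exact ⟨fun x y => (hφ1 (ψ x) (ψ y)).trans (hψ1 x y),
      fun x => (hφ2 (ψ x)).trans (hψ2 x)⟩
  inv_mem' := by
    rintro φ ⟨h1, h2⟩
    refine ⟨fun x y => ?_, fun x => ?_⟩
    · have := h1 (φ⁻¹ x) (φ⁻¹ y)
      rw [MulAut.apply_inv_self, MulAut.apply_inv_self] at this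
      exact this.symm
    · have := h2 (φ⁻¹ x)
      rw [MulAut.apply_inv_self] at this
      exact this.symm

/-- The action of `S_α` on `M^α` by permutation of coordinates, as a homomorphism
into the automorphism group. -/
def permActionHom (M : Type*) [Monoid M] (α : ℕ) :
    Equiv.Perm (Fin α) →* MulAut (Fin α → M) where
  toFun σ :=
    { toFun := fun f i => f (σ⁻¹ i)
      invFun := fun f i => f (σ i)
      left_inv := fun f => by funext i; simp
      right_inv := fun f => by funext i; simp
      map_mul' := fun _ _ => rfl }
  map_one' := by ext f i; simp
  map_mul' σ τ := by ext f i; simp [mul_inv_rev]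

/-- A cyclic group code: closed under the cyclic shift of coordinates. -/
def IsCyclicGC {n : ℕ} (C : Subgroup (Fin n → G)) : Prop :=
  ∀ x ∈ C, (x ∘ finRotate n) ∈ C

end GroupCodes

set_option linter.unusedSectionVars false

section Aux
variable {G : Type*} [Group G] [DecidableEq G]

open Finset

lemma hammingDist_comp_equiv {N n : ℕ} (E : Fin N ≃ Fin n) (x y : Fin n → G) :
    hammingDist (x ∘ E) (y ∘ E) = hammingDist x y := by
  simp only [hammingDist]
  apply Finset.card_bij' (fun i _ => E i) (fun j _ => E.symm j) <;>
    simp [Function.comp]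

/-- Canonical position of coordinate `j` of the `i`-th block inside `Fin (∑ i, len i)`. -/
def finPos : ∀ {k : ℕ} {len : Fin k → ℕ} (i : Fin k), Fin (len i) → Fin (∑ i, len i)
  | 0, _, i => i.elim0
  | k+1, len, i => fun j =>
    Fin.cast (Fin.sum_univ_succ len).symm
      ((Fin.cases (motive := fun i => Fin (len i) → Fin (len 0 + ∑ i : Fin k, len i.succ))
        (fun j => Fin.castAdd _ j)
        (fun i' j => Fin.natAdd (len 0) (finPos i' j)) i) j)

lemma finPos_zero {k : ℕ} {len : Fin (k+1) → ℕ} (j : Fin (len 0)) :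
    finPos (0 : Fin (k+1)) j
      = Fin.cast (Fin.sum_univ_succ len).symm (Fin.castAdd (∑ i : Fin k, len i.succ) j) := by
  simp [finPos]

lemma finPos_succ {k : ℕ} {len : Fin (k+1) → ℕ} (i : Fin k) (j : Fin (len i.succ)) :
    finPos i.succ j
      = Fin.cast (Fin.sum_univ_succ len).symm
          (Fin.natAdd (len 0) (finPos (len := fun i => len i.succ) i j)) := by
  simp [finPos]

lemma finPos_zero_val {k : ℕ} {len : Fin (k+1) → ℕ} (j : Fin (len 0)) :
    ((finPos (0 : Fin (k+1)) j : Fin (∑ i, len i)) : ℕ) = (j : ℕ) := by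
  rw [finPos_zero]; simp

lemma finPos_succ_val {k : ℕ} {len : Fin (k+1) → ℕ} (i : Fin k) (j : Fin (len i.succ)) :
    ((finPos i.succ j : Fin (∑ i, len i)) : ℕ)
      = len 0 + ((finPos (len := fun i => len i.succ) i j : Fin _) : ℕ) := by
  rw [finPos_succ]; simp

lemma finPos_inj : ∀ {k : ℕ} {len : Fin k → ℕ},
    Function.Injective (fun p : Σ i, Fin (len i) => finPos p.1 p.2)
  | 0, len => fun p => p.1.elim0
  | k+1, len => by
    rintro ⟨i, j⟩ ⟨i', j'⟩ h
    simp only at h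
    induction i using Fin.cases with
    | zero =>
      induction i' using Fin.cases with
      | zero =>
        have hv : (j : ℕ) = (j' : ℕ) := by
          have := congrArg Fin.val h
          rwa [finPos_zero_val, finPos_zero_val] at this
        congr 1
        exact Fin.ext hv
      | succ i'' =>
        have := congrArg Fin.val h
        rw [finPos_zero_val, finPos_succ_val] at this
        exact absurd this (by have := j.isLt; omega)
    | succ i'' =>
      induction i' using Fin.cases with
      | zero =>
        have := congrArg Fin.val h
        rw [finPos_succ_val, finPos_zero_val] at this
        exact absurd this (by have := j'.isLt; omega)
      | succ i3 =>
        have hv := congrArg Fin.val h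
        rw [finPos_succ_val, finPos_succ_val] at hv
        have hv2 : ((finPos (len := fun i => len i.succ) i'' j : Fin _) : ℕ)
            = ((finPos (len := fun i => len i.succ) i3 j' : Fin _) : ℕ) := by omega
        have := finPos_inj (len := fun i => len i.succ)
          (a₁ := ⟨i'', j⟩) (a₂ := ⟨i3, j'⟩) (by simpa using Fin.ext hv2)
        obtain ⟨h1, h2⟩ := Sigma.mk.inj_iff.mp this
        subst h1
        congr 1
        exact eq_of_heq h2

lemma finPos_bijective {k : ℕ} {len : Fin k → ℕ} :
    Function.Bijective (fun p : Σ i, Fin (len i) => finPos p.1 p.2) := by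
  rw [Fintype.bijective_iff_injective_and_card]
  exact ⟨finPos_inj, by simp⟩

/-- `finPos` as an equivalence. -/
noncomputable def finPosEquiv {k : ℕ} {len : Fin k → ℕ} : (Σ i, Fin (len i)) ≃ Fin (∑ i, len i) :=
  Equiv.ofBijective _ finPos_bijective

lemma finPosEquiv_symm_finPos {k : ℕ} {len : Fin k → ℕ} (i : Fin k) (j : Fin (len i)) :
    finPosEquiv.symm (finPos i j) = ⟨i, j⟩ := by
  rw [Equiv.symm_apply_eq]; rfl

end Aux
section Aux2
variable {G : Type*} [Group G] [DecidableEq G]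
open Finset

lemma mem_gcMultiSum_iff : ∀ {k : ℕ} {len : Fin k → ℕ} (D : ∀ i, Subgroup (Fin (len i) → G))
    (z : Fin (∑ i, len i) → G),
    z ∈ gcMultiSum D ↔ ∀ i, (fun j => z (finPos i j)) ∈ D i
  | 0, len, D, z => by
    constructor
    · intro _ i; exact i.elim0
    · intro _; show z ∈ (⊤ : Subgroup _); exact Subgroup.mem_top z
  | k+1, len, D, z => by
    show (_ ∈ Subgroup.comap _ _) ↔ _
    rw [Subgroup.mem_comap]
    show (_ ∈ Subgroup.comap _ _) ↔ _
    rw [Subgroup.mem_comap, Subgroup.mem_prod]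
    rw [mem_gcMultiSum_iff (fun i => D i.succ)]
    rw [Fin.forall_fin_succ]
    constructor
    · rintro ⟨h0, hs⟩
      refine ⟨?_, fun i => ?_⟩
      · convert h0 using 1
        rfl
      · convert hs i using 1
        rfl
    · rintro ⟨h0, hs⟩
      refine ⟨?_, fun i => ?_⟩
      · convert h0 using 1
        rfl
      · convert hs i using 1
        rfl

lemma groupCodeIso_of_char {N n : ℕ} (E : Fin N ≃ Fin n) (C : Subgroup (Fin n → G))
    (D : Subgroup (Fin N → G)) (h : ∀ x : Fin n → G, x ∈ C ↔ (x ∘ E) ∈ D) :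
    GroupCodeIso C D := by
  have hup : ∀ y : Fin N → G, (y ∘ E.symm) ∘ E = y := by
    intro y; funext i; simp
  refine ⟨fun x => x ∘ E, fun y => y ∘ E.symm,
    ⟨fun _ _ => rfl, fun x hx => (h x).1 hx, fun x y => (hammingDist_comp_equiv E x y).le⟩,
    ⟨fun _ _ => rfl, ?_, fun x y => (hammingDist_comp_equiv E.symm x y).le⟩, ?_, ?_⟩
  · intro y hy
    exact (h (y ∘ E.symm)).2 (by rw [hup]; exact hy)
  · intro x; funext i; simp
  · intro y; funext i; simp

end Aux2
section Aux3
variable {G : Type*} [Group G] [DecidableEq G]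
open Finset Function

lemma wt_mulSingle {m : ℕ} (i : Fin m) (g : G) (hg : g ≠ 1) :
    hammingDist (Pi.mulSingle i g) (1 : Fin m → G) = 1 := by
  simp only [hammingDist]
  have : ({a | (Pi.mulSingle i g : Fin m → G) a ≠ (1 : Fin m → G) a} : Finset (Fin m)) = {i} := by
    ext a
    by_cases h : a = i <;> simp [Pi.mulSingle_apply, h, hg]
  rw [this, Finset.card_singleton]

lemma single_of_wt_one {m : ℕ} (z : Fin m → G) (hz : hammingDist z (1 : Fin m → G) = 1) :
    ∃ (j : Fin m) (c : G), c ≠ 1 ∧ z = Pi.mulSingle j c := by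
  simp only [hammingDist] at hz
  obtain ⟨j, hj⟩ := Finset.card_eq_one.mp hz
  have hjm : z j ≠ 1 := by
    have : j ∈ ({a | z a ≠ (1 : Fin m → G) a} : Finset (Fin m)) := by rw [hj]; exact mem_singleton_self j
    simpa using this
  refine ⟨j, z j, hjm, ?_⟩
  funext a
  by_cases h : a = j
  · subst h; simp
  · have : a ∉ ({a | z a ≠ (1 : Fin m → G) a} : Finset (Fin m)) := by
      rw [hj]; simp [h]
    simp only [Finset.mem_filter] at this
    push_neg at this
    have ha : z a = 1 := by simpa using this (Finset.mem_univ a)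
    rw [ha, Pi.mulSingle_apply, if_neg h]

lemma exists_splitset_of_decomposable {n : ℕ} [Nontrivial G] [Fintype G]
    (C : Subgroup (Fin n → G)) (hdec : GCDecomposable C) :
    ∃ S : Finset (Fin n), S.Nonempty ∧ S ≠ Finset.univ ∧
      ∀ x ∈ C, S.piecewise x 1 ∈ C := by
  classical
  obtain ⟨p, q, D, E, hp, hq, φ, ψ, ⟨φmul, φmem, φdist⟩, ⟨ψmul, ψmem, ψdist⟩, hlr, hrl⟩ := hdec
  -- φ(1) = 1
  have h1 : φ 1 = 1 := by
    have := φmul 1 1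
    rw [mul_one] at this
    exact (left_eq_mul.mp this)
  -- isometry
  have φiso : ∀ x y, hammingDist (φ x) (φ y) = hammingDist x y := by
    intro x y
    refine le_antisymm (φdist x y) ?_
    have := ψdist (φ x) (φ y)
    rwa [hlr, hlr] at this
  -- n = p + q
  have hcard : n = p + q := by
    have hb : Function.Bijective φ := ⟨hlr.injective, hrl.surjective⟩
    have := Fintype.card_of_bijective hb
    rw [Fintype.card_fun, Fintype.card_fun, Fintype.card_fin, Fintype.card_fin] at this
    exact Nat.pow_right_injective Fintype.one_lt_card this
  subst hcard
  obtain ⟨g0, hg0⟩ := exists_ne (1 : G)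
  -- support structure of φ on mulSingles
  have key : ∀ (i : Fin (p+q)) (g : G), g ≠ 1 →
      ∃ j c, c ≠ 1 ∧ φ (Pi.mulSingle i g) = Pi.mulSingle j c := by
    intro i g hg
    apply single_of_wt_one
    have := φiso (Pi.mulSingle i g) 1
    rw [h1] at this
    rw [this, wt_mulSingle i g hg]
  choose π c0 hc0 hπ using fun i => key i g0 hg0
  have hsupp : ∀ (i : Fin (p+q)) (g : G), ∃ c', φ (Pi.mulSingle i g) = Pi.mulSingle (π i) c' := by
    intro i g
    by_cases hg : g = 1
    · exact ⟨1, by simp [hg, h1]⟩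
    obtain ⟨j, c', hc', hj⟩ := key i g hg
    refine ⟨c', ?_⟩
    have hjeq : j = π i := by
      by_contra hjπ
      by_cases hgg : g = g0
      · subst hgg
        have hπi := hπ i
        rw [hj] at hπi
        have := congrFun hπi j
        rw [Pi.mulSingle_apply, Pi.mulSingle_apply, if_pos rfl, if_neg hjπ] at this
        exact hc' this
      · have hd : hammingDist (Pi.mulSingle j c' : Fin (p+q) → G) (Pi.mulSingle (π i) (c0 i)) ≥ 2 := by
          simp only [hammingDist]
          have hsub : ({j, π i} : Finset (Fin (p+q))) ⊆
              ({a | (Pi.mulSingle j c' : Fin (p+q) → G) a ≠ (Pi.mulSingle (π i) (c0 i) : Fin (p+q) → G) a} : Finset (Fin (p+q))) := by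
            intro a ha
            simp only [Finset.mem_insert, Finset.mem_singleton] at ha
            rcases ha with rfl | rfl
            · simp [Pi.mulSingle_apply, hjπ, hc']
            · simp [Pi.mulSingle_apply, Ne.symm hjπ, (hc0 i).symm, hc0 i]
          have := Finset.card_le_card hsub
          rwa [Finset.card_insert_of_notMem (by simp [hjπ]), Finset.card_singleton] at this
        have hd2 : hammingDist (Pi.mulSingle j c' : Fin (p+q) → G) (Pi.mulSingle (π i) (c0 i)) = 1 := by
          rw [← hj, ← hπ i, φiso]
          simp only [hammingDist]
          have : ({a | (Pi.mulSingle i g : Fin (p+q) → G) a ≠ (Pi.mulSingle i g0 : Fin (p+q) → G) a} : Finset (Fin (p+q))) = {i} := by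
            ext a
            by_cases h : a = i <;> simp [Pi.mulSingle_apply, h, hgg]
          rw [this, Finset.card_singleton]
        omega
    rw [hj, hjeq]
  choose f hf using hsupp
  have f1 : ∀ i, f i 1 = 1 := by
    intro i
    have := hf i 1
    rw [Pi.mulSingle_one, h1] at this
    have := congrFun this.symm (π i)
    simpa using this
  -- π injective hence bijective
  have πinj : Function.Injective π := by
    intro i i' hii
    by_contra hne
    have hx : hammingDist (Pi.mulSingle i g0 * Pi.mulSingle i' g0 : Fin (p+q) → G) 1 = 2 := by
      simp only [hammingDist]
      have : ({a | (Pi.mulSingle i g0 * Pi.mulSingle i' g0 : Fin (p+q) → G) a ≠ (1 : Fin (p+q) → G) a} : Finset (Fin (p+q))) = {i, i'} := by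
        ext a
        by_cases h : a = i
        · subst h; simp [Pi.mulSingle_apply, hne, hg0]
        · by_cases h' : a = i'
          · subst h'; simp [Pi.mulSingle_apply, h, Ne.symm hne, hg0]
          · simp [Pi.mulSingle_apply, h, h']
      rw [this, Finset.card_insert_of_notMem (by simp [hne]), Finset.card_singleton]
    have hφx : φ (Pi.mulSingle i g0 * Pi.mulSingle i' g0) = Pi.mulSingle (π i') (f i g0 * f i' g0) := by
      rw [φmul, hf, hf, hii]
      funext a
      by_cases h : a = π i'
      · subst h; simp [Pi.mulSingle_apply]
      · simp [Pi.mulSingle_apply, h]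
    have := φiso (Pi.mulSingle i g0 * Pi.mulSingle i' g0) 1
    rw [h1, hx, hφx] at this
    by_cases hcc : f i g0 * f i' g0 = 1
    · rw [hcc] at this
      simp at this
    · rw [wt_mulSingle _ _ hcc] at this
      omega
  have πbij : Function.Bijective π := Finite.injective_iff_bijective.mp πinj
  let Pe : Fin (p+q) ≃ Fin (p+q) := Equiv.ofBijective π πbij
  -- support transport
  have hsupp2 : ∀ (N : ℕ) (w : Fin (p+q) → G),
      (Finset.univ.filter (fun i => w i ≠ 1)).card ≤ N →
      ∀ j, (∀ i, w i ≠ 1 → π i ≠ j) → φ w j = 1 := by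
    intro N
    induction N with
    | zero =>
      intro w hw j _
      have : w = 1 := by
        funext a
        by_contra ha
        have : a ∈ Finset.univ.filter (fun i => w i ≠ 1) := by simpa using ha
        have := Finset.card_pos.mpr ⟨a, this⟩
        omega
      rw [this, h1]
      rfl
    | succ N IH =>
      intro w hw j hj
      by_cases h0 : ∃ i, w i ≠ 1
      · obtain ⟨i0, hi0⟩ := h0
        set w' := Function.update w i0 1 with hw'
        have hsplit : w = Pi.mulSingle i0 (w i0) * w' := by
          funext a
          by_cases ha : a = i0
          · subst ha; simp [hw', Pi.mulSingle_apply]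
          · simp [hw', Pi.mulSingle_apply, ha, Function.update_of_ne ha]
        have hferase : Finset.univ.filter (fun i => w' i ≠ 1)
            = (Finset.univ.filter (fun i => w i ≠ 1)).erase i0 := by
          ext a
          by_cases ha : a = i0
          · subst ha; simp [hw']
          · simp [hw', ha, Function.update_of_ne ha]
        have hcard : (Finset.univ.filter (fun i => w' i ≠ 1)).card ≤ N := by
          rw [hferase, Finset.card_erase_of_mem (by simpa using hi0)]
          omega
        rw [hsplit, φmul, Pi.mul_apply]
        have e1 : φ (Pi.mulSingle i0 (w i0)) j = 1 := by
          rw [hf, Pi.mulSingle_apply, if_neg]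
          exact fun hh => (hj i0 hi0) hh.symm
        have e2 : φ w' j = 1 := by
          apply IH w' hcard j
          intro i hi
          apply hj
          by_cases hii : i = i0
          · subst hii; simp [hw'] at hi
          · rwa [hw', Function.update_of_ne hii] at hi
        rw [e1, e2, mul_one]
      · push_neg at h0
        have : w = 1 := funext fun a => h0 a
        rw [this, h1]
        rfl
  -- the split set
  set S : Finset (Fin (p+q)) := Finset.univ.filter (fun i => ((π i : Fin (p+q)) : ℕ) < p) with hS
  set T : Finset (Fin (p+q)) := Finset.univ.filter (fun j : Fin (p+q) => (j : ℕ) < p) with hT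
  have hmask : ∀ x : Fin (p+q) → G, φ (S.piecewise x 1) = T.piecewise (φ x) 1 := by
    intro x
    set u := S.piecewise x (1 : Fin (p+q) → G) with hu2
    set v := S.piecewise (1 : Fin (p+q) → G) x with hv2
    have hx : x = u * v := by
      funext a
      by_cases ha : a ∈ S
      · rw [Pi.mul_apply, hu2, hv2, Finset.piecewise_eq_of_mem _ _ _ ha,
          Finset.piecewise_eq_of_mem _ _ _ ha]
        simp
      · rw [Pi.mul_apply, hu2, hv2, Finset.piecewise_eq_of_notMem _ _ _ ha,
          Finset.piecewise_eq_of_notMem _ _ _ ha]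
        simp
    have hu : ∀ j, j ∉ T → φ u j = 1 := by
      intro j hj
      apply hsupp2 (Finset.univ.filter (fun i => u i ≠ 1)).card u le_rfl j
      intro i hi hip
      apply hj
      have hiS : i ∈ S := by
        by_contra hiS
        exact hi (by rw [hu2, Finset.piecewise_eq_of_notMem _ _ _ hiS]; rfl)
      simp only [hS, Finset.mem_filter, Finset.mem_univ, true_and] at hiS
      simp only [hT, Finset.mem_filter, Finset.mem_univ, true_and]
      rw [← hip]
      exact hiS
    have hv : ∀ j, j ∈ T → φ v j = 1 := by
      intro j hj
      apply hsupp2 (Finset.univ.filter (fun i => v i ≠ 1)).card v le_rfl j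
      intro i hi hip
      have hiS : i ∉ S := by
        intro hiS
        exact hi (by rw [hv2, Finset.piecewise_eq_of_mem _ _ _ hiS]; rfl)
      simp only [hS, Finset.mem_filter, Finset.mem_univ, true_and] at hiS
      simp only [hT, Finset.mem_filter, Finset.mem_univ, true_and] at hj
      rw [← hip] at hj
      exact hiS hj
    funext j
    by_cases hj : j ∈ T
    · rw [Finset.piecewise_eq_of_mem _ _ _ hj]
      conv_rhs => rw [hx, φmul]
      rw [Pi.mul_apply, hv j hj, mul_one]
    · rw [Finset.piecewise_eq_of_notMem _ _ _ hj]
      exact hu j hj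
  -- T-mask preserves gcSum membership
  have Tmem : ∀ z, z ∈ gcSum D E → T.piecewise z 1 ∈ gcSum D E := by
    intro z hz
    simp only [gcSum, Subgroup.mem_comap, Subgroup.mem_prod, splitHom, MonoidHom.coe_mk, OneHom.coe_mk] at hz ⊢
    obtain ⟨hz1, hz2⟩ := hz
    constructor
    · convert hz1 using 1
      funext i
      apply Finset.piecewise_eq_of_mem
      simp [hT, Fin.coe_castAdd, i.isLt]
    · have : (fun j => T.piecewise z 1 (Fin.natAdd p j)) = (1 : Fin q → G) := by
        funext j
        apply Finset.piecewise_eq_of_notMem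
        simp [hT, Fin.coe_natAdd]
      rw [this]
      exact one_mem E
  refine ⟨S, ?_, ?_, ?_⟩
  · refine ⟨Pe.symm ⟨0, by omega⟩, ?_⟩
    simp only [hS, Finset.mem_filter, Finset.mem_univ, true_and]
    have : π (Pe.symm ⟨0, by omega⟩) = ⟨0, by omega⟩ := Pe.apply_symm_apply _
    rw [this]
    exact hp
  · intro hSu
    have : Pe.symm ⟨p, by omega⟩ ∈ S := hSu ▸ Finset.mem_univ _
    simp only [hS, Finset.mem_filter, Finset.mem_univ, true_and] at this
    rw [show π (Pe.symm ⟨p, by omega⟩) = ⟨p, by omega⟩ from Pe.apply_symm_apply _] at this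
    simp at this
  · intro x hx
    have h2 := φmem x hx
    have h3 := Tmem _ h2
    have h4 := ψmem _ h3
    rw [← hmask, hlr] at h4
    exact h4

end Aux3
section Aux4
variable {G : Type*} [Group G] [DecidableEq G]
open Finset Function
open Fin.NatCast

lemma cyclic_add_closure {n : ℕ} (C : Subgroup (Fin (n+1) → G)) (hcyc : IsCyclicGC C) :
    ∀ (c : Fin (n+1)) (x : Fin (n+1) → G), x ∈ C → (fun i => x (i + c)) ∈ C := by
  have hone : ∀ x ∈ C, (fun i : Fin (n+1) => x (i + 1)) ∈ C := by
    intro x hx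
    have h2 : (x ∘ finRotate (n+1)) = fun i => x (i + 1) := by
      funext i; simp
    rw [← h2]
    exact hcyc x hx
  have hnat : ∀ (k : ℕ) (x : Fin (n+1) → G), x ∈ C →
      (fun i => x (i + (k : Fin (n+1)))) ∈ C := by
    intro k
    induction k with
    | zero =>
      intro x hx
      have : (fun i : Fin (n+1) => x (i + ((0:ℕ) : Fin (n+1)))) = x := by
        funext i; simp
      rw [this]; exact hx
    | succ k IH =>
      intro x hx
      have h2 := IH _ (hone x hx)
      have h3 : (fun i : Fin (n+1) => x (i + ((k:ℕ) : Fin (n+1)) + 1))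
          = fun i : Fin (n+1) => x (i + (((k+1:ℕ)) : Fin (n+1))) := by
        funext i
        congr 1
        push_cast
        rw [add_assoc]
      rw [← h3]; exact h2
  intro c x hx
  have := hnat c.val x hx
  simpa [Fin.cast_val_eq_self] using this

lemma exists_modclass_masks {n : ℕ} (C : Subgroup (Fin (n+1) → G)) (hcyc : IsCyclicGC C)
    (S0 : Finset (Fin (n+1))) (hne : S0.Nonempty) (hnu : S0 ≠ Finset.univ)
    (hS0 : ∀ x ∈ C, S0.piecewise x 1 ∈ C) :
    ∃ t, t ∣ (n+1) ∧ 1 < t ∧ ∀ (j : ℕ), ∀ x ∈ C,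
      (Finset.univ.filter (fun i : Fin (n+1) => (i : ℕ) % t = j)).piecewise x 1 ∈ C := by
  classical
  set M : Finset (Fin (n+1)) → Prop := fun S => ∀ x ∈ C, S.piecewise x 1 ∈ C with hM
  have hadd := cyclic_add_closure C hcyc
  have Muniv : M Finset.univ := by
    intro x hx
    rwa [Finset.piecewise_univ]
  have Mcompl : ∀ S, M S → M Sᶜ := by
    intro S hS x hx
    have hkey : Sᶜ.piecewise x (1 : Fin (n+1) → G) = (S.piecewise x 1)⁻¹ * x := by
      funext a
      by_cases ha : a ∈ S
      · rw [Finset.piecewise_eq_of_notMem _ _ _ (by simpa using ha), Pi.mul_apply,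
          Pi.inv_apply, Finset.piecewise_eq_of_mem _ _ _ ha]
        simp
      · rw [Finset.piecewise_eq_of_mem _ _ _ (by simpa using ha), Pi.mul_apply,
          Pi.inv_apply, Finset.piecewise_eq_of_notMem _ _ _ ha]
        simp
    rw [hkey]
    exact mul_mem (inv_mem (hS x hx)) hx
  have Minter : ∀ S T, M S → M T → M (S ∩ T) := by
    intro S T hS hT x hx
    have hkey : (S ∩ T).piecewise x (1 : Fin (n+1) → G) = T.piecewise (S.piecewise x 1) 1 := by
      funext a
      by_cases haT : a ∈ T
      · rw [Finset.piecewise_eq_of_mem _ _ _ haT]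
        by_cases haS : a ∈ S
        · rw [Finset.piecewise_eq_of_mem _ _ _ (Finset.mem_inter.mpr ⟨haS, haT⟩),
            Finset.piecewise_eq_of_mem _ _ _ haS]
        · rw [Finset.piecewise_eq_of_notMem _ _ _ (fun h => haS (Finset.mem_inter.mp h).1),
            Finset.piecewise_eq_of_notMem _ _ _ haS]
      · rw [Finset.piecewise_eq_of_notMem _ _ _ haT,
          Finset.piecewise_eq_of_notMem _ _ _ (fun h => haT (Finset.mem_inter.mp h).2)]
    rw [hkey]
    exact hT _ (hS x hx)
  have Mshift : ∀ (c : Fin (n+1)) S, M S → M (S.image (· + c)) := by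
    intro c S hS x hx
    have h1 : (fun i => x (i + c)) ∈ C := hadd c x hx
    have h2 := hS _ h1
    have hkey : S.piecewise (fun i => x (i + c)) (1 : Fin (n+1) → G)
        = fun i => ((S.image (· + c)).piecewise x 1) (i + c) := by
      funext a
      have hmem : a + c ∈ S.image (· + c) ↔ a ∈ S := by
        constructor
        · intro h
          obtain ⟨b, hb, hba⟩ := Finset.mem_image.mp h
          have : b = a := by
            have := add_right_cancel hba
            exact this
          rwa [← this]
        · intro h; exact Finset.mem_image.mpr ⟨a, h, rfl⟩
      by_cases ha : a ∈ S
      · rw [Finset.piecewise_eq_of_mem _ _ _ ha,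
          Finset.piecewise_eq_of_mem _ _ _ (hmem.mpr ha)]
      · rw [Finset.piecewise_eq_of_notMem _ _ _ ha,
          Finset.piecewise_eq_of_notMem _ _ _ (fun h => ha (hmem.mp h))]
        rfl
    rw [hkey] at h2
    set z := (S.image (· + c)).piecewise x (1 : Fin (n+1) → G) with hz
    have h3 := hadd (-c) _ h2
    have hfin : (fun i => (fun i' => z (i' + c)) (i + -c)) = z := by
      funext i
      simp [add_assoc]
    rwa [hfin] at h3
  -- the relation
  set R : Fin (n+1) → Fin (n+1) → Prop := fun i j => ∀ k : Fin (n+1), (i + k ∈ S0 ↔ j + k ∈ S0) with hR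
  have Rrefl : ∀ i, R i i := fun i k => Iff.rfl
  have Rsymm : ∀ {i j}, R i j → R j i := fun h k => (h k).symm
  have Rtrans : ∀ {i j l}, R i j → R j l → R i l := fun h1 h2 k => (h1 k).trans (h2 k)
  have Radd : ∀ (c : Fin (n+1)) {i j}, R i j → R (i + c) (j + c) := by
    intro c i j h k
    have := h (c + k)
    rwa [← add_assoc, ← add_assoc] at this
  -- atoms are split sets
  have Matom : ∀ j0 : Fin (n+1), M (Finset.univ.filter (fun i => R i j0)) := by
    intro j0
    -- W k = {i | i + k ∈ S0}
    have hWmem : ∀ (k : Fin (n+1)), ∀ i, i ∈ S0.image (· + (-k)) ↔ i + k ∈ S0 := by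
      intro k i
      constructor
      · intro h
        obtain ⟨b, hb, hba⟩ := Finset.mem_image.mp h
        have : b = i + k := by rw [← hba]; simp [add_assoc]
        rwa [← this]
      · intro h
        exact Finset.mem_image.mpr ⟨i + k, h, by simp [add_assoc]⟩
    have MW : ∀ k : Fin (n+1), M (S0.image (· + (-k))) := fun k => Mshift (-k) S0 hS0
    set B : Fin (n+1) → Finset (Fin (n+1)) :=
      fun k => if j0 + k ∈ S0 then S0.image (· + (-k)) else (S0.image (· + (-k)))ᶜ with hB
    have MB : ∀ k, M (B k) := by
      intro k
      by_cases h : j0 + k ∈ S0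
      · have hbk : B k = S0.image (· + (-k)) := by simp only [hB]; rw [if_pos h]
        rw [hbk]; exact MW k
      · have hbk : B k = (S0.image (· + (-k)))ᶜ := by simp only [hB]; rw [if_neg h]
        rw [hbk]; exact Mcompl _ (MW k)
    have hBmem : ∀ k i, i ∈ B k ↔ (i + k ∈ S0 ↔ j0 + k ∈ S0) := by
      intro k i
      by_cases h : j0 + k ∈ S0
      · have hbk : B k = S0.image (· + (-k)) := by simp only [hB]; rw [if_pos h]
        rw [hbk]
        simp only [hWmem k i]
        exact ⟨fun hh => ⟨fun _ => h, fun _ => hh⟩, fun hh => hh.mpr h⟩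
      · have hbk : B k = (S0.image (· + (-k)))ᶜ := by simp only [hB]; rw [if_neg h]
        rw [hbk, Finset.mem_compl]
        simp only [hWmem k i]
        constructor
        · intro hh
          exact ⟨fun h2 => absurd h2 hh, fun h2 => absurd h2 h⟩
        · intro hh h2
          exact h (hh.mp h2)
    -- intersection of the B k over all k
    have Mfam : ∀ (F : Finset (Fin (n+1))),
        M (Finset.univ.filter (fun i => ∀ a ∈ F, i ∈ B a)) := by
      intro F
      induction F using Finset.induction_on with
      | empty =>
        have : (Finset.univ.filter (fun i : Fin (n+1) => ∀ a ∈ (∅ : Finset (Fin (n+1))), i ∈ B a))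
            = Finset.univ := by
          ext i; simp
        rw [this]; exact Muniv
      | insert a F' ha IH =>
        have : (Finset.univ.filter (fun i : Fin (n+1) => ∀ b ∈ insert a F', i ∈ B b))
            = B a ∩ (Finset.univ.filter (fun i => ∀ b ∈ F', i ∈ B b)) := by
          ext i
          simp only [Finset.mem_filter, Finset.mem_univ, true_and, Finset.mem_inter,
            Finset.mem_insert]
          constructor
          · intro h
            exact ⟨h a (Or.inl rfl), fun b hb => h b (Or.inr hb)⟩
          · rintro ⟨h1, h2⟩ b (rfl | hb)
            · exact h1
            · exact h2 b hb
        rw [this]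
        exact Minter _ _ (MB a) IH
    have : (Finset.univ.filter (fun i => R i j0))
        = Finset.univ.filter (fun i => ∀ a ∈ (Finset.univ : Finset (Fin (n+1))), i ∈ B a) := by
      ext i
      simp only [Finset.mem_filter, Finset.mem_univ, true_and]
      constructor
      · intro h a _
        exact (hBmem a i).mpr (h a)
      · intro h k
        exact (hBmem k i).mp (h k trivial)
    rw [this]
    exact Mfam Finset.univ
  -- ℕ-level congruence
  set Q : ℕ → ℕ → Prop := fun a b => R ((a : ℕ) : Fin (n+1)) ((b : ℕ) : Fin (n+1)) with hQ
  have Qshift : ∀ (c a b : ℕ), Q a b → Q (a + c) (b + c) := by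
    intro c a b h
    have := Radd ((c : ℕ) : Fin (n+1)) h
    simp only [hQ]
    push_cast
    exact this
  have Qrefl : ∀ a, Q a a := fun a => Rrefl _
  have Qn0 : Q (n+1) 0 := by
    simp only [hQ]
    have : (((n+1 : ℕ)) : Fin (n+1)) = ((0 : ℕ) : Fin (n+1)) := by
      simp
    rw [this]
    exact Rrefl _
  -- minimal positive period
  have hex : ∃ k, 0 < k ∧ Q k 0 := ⟨n+1, by omega, Qn0⟩
  set t := Nat.find hex with ht
  obtain ⟨ht0, hQt⟩ : 0 < t ∧ Q t 0 := Nat.find_spec hex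
  have hmin : ∀ k, k < t → ¬(0 < k ∧ Q k 0) := fun k hk => Nat.find_min hex hk
  have claim1 : ∀ s : ℕ, Q (t * s) 0 := by
    intro s
    induction s with
    | zero => simpa using Qrefl 0
    | succ s IH =>
      have h1 : Q (t * s + t) (0 + t) := Qshift t _ _ IH
      simp only [zero_add] at h1
      have : Q (t * (s+1)) t := by
        have he : t * (s+1) = t * s + t := by ring
        rwa [he]
      exact Rtrans this hQt
  have claim2 : ∀ a : ℕ, Q a 0 → t ∣ a := by
    intro a ha
    rcases Nat.eq_zero_or_pos (a % t) with h | h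
    · exact Nat.dvd_of_mod_eq_zero h
    exfalso
    have h1 : Q (t * (a / t)) 0 := claim1 _
    have h2 : Q (t * (a / t) + a % t) (0 + a % t) := Qshift _ _ _ h1
    simp only [zero_add, Nat.div_add_mod] at h2
    have h3 : Q (a % t) 0 := Rtrans (Rsymm h2) ha
    exact hmin (a % t) (Nat.mod_lt a ht0) ⟨h, h3⟩
  have htN : t ∣ (n+1) := claim2 (n+1) Qn0
  -- t > 1
  have ht1 : 1 < t := by
    rcases Nat.lt_or_ge t 2 with h | h
    · exfalso
      have ht1' : t = 1 := by omega
      have hall : ∀ i : Fin (n+1), R i 0 := by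
        intro i
        have : Q (i : ℕ) 0 := by
          have := claim1 (i : ℕ)
          simp only [ht1', one_mul] at this
          exact this
        simp only [hQ] at this
        rwa [Fin.cast_val_eq_self i] at this
      obtain ⟨i0, hi0⟩ := hne
      apply hnu
      apply Finset.eq_univ_iff_forall.mpr
      intro i
      have hri : R i i0 := Rtrans (hall i) (Rsymm (hall i0))
      have := hri 0
      rw [add_zero, add_zero] at this
      exact this.mpr hi0
    · omega
  -- mod-class characterization
  have Rchar : ∀ i i' : Fin (n+1), R i i' ↔ (i : ℕ) % t = (i' : ℕ) % t := by
    intro i i'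
    constructor
    · intro h
      have hQ2 : Q (i : ℕ) (i' : ℕ) := by
        simp only [hQ]
        rw [Fin.cast_val_eq_self, Fin.cast_val_eq_self]
        exact h
      have h2 : Q ((i : ℕ) + ((n+1) - (i' : ℕ))) ((i' : ℕ) + ((n+1) - (i' : ℕ))) := Qshift _ _ _ hQ2
      have hle : (i' : ℕ) ≤ n+1 := le_of_lt i'.isLt
      have he : (i' : ℕ) + ((n+1) - (i' : ℕ)) = n+1 := by omega
      simp only [he] at h2
      have h3 : Q ((i : ℕ) + ((n+1) - (i' : ℕ))) 0 := Rtrans h2 Qn0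
      obtain ⟨a, ha⟩ := claim2 _ h3
      obtain ⟨b, hb⟩ := htN
      have e3 : (i : ℕ) + (n+1) = t * a + (i' : ℕ) := by omega
      have e1' : ∀ z : ℕ, (z + (n+1)) % t = z % t := by
        intro z
        rw [hb, Nat.add_mul_mod_self_left]
      have e1 : ((i : ℕ) + (n+1)) % t = (i : ℕ) % t := e1' _
      have e2 : (t * a + (i' : ℕ)) % t = (i' : ℕ) % t := by
        rw [Nat.mul_add_mod]
      calc (i : ℕ) % t = ((i : ℕ) + (n+1)) % t := e1.symm
        _ = (t * a + (i' : ℕ)) % t := by rw [e3]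
        _ = (i' : ℕ) % t := e2
    · intro h
      have key : ∀ a : ℕ, Q a (a % t) := by
        intro a
        have h1 : Q (t * (a / t)) 0 := claim1 _
        have h2 : Q (t * (a / t) + a % t) (0 + a % t) := Qshift _ _ _ h1
        simp only [zero_add, Nat.div_add_mod] at h2
        exact h2
      have h1 : Q (i : ℕ) ((i : ℕ) % t) := key _
      have h2 : Q (i' : ℕ) ((i' : ℕ) % t) := key _
      simp only [h] at h1
      have h3 : Q (i : ℕ) (i' : ℕ) := Rtrans h1 (Rsymm h2)
      simp only [hQ] at h3
      rw [Fin.cast_val_eq_self, Fin.cast_val_eq_self] at h3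
      exact h3
  refine ⟨t, htN, ht1, ?_⟩
  intro j x hx
  by_cases hj : j < t
  · -- the mask is the atom of (j : Fin (n+1))
    have hjN : j < n+1 := lt_of_lt_of_le hj (Nat.le_of_dvd (by omega) htN)
    have hval : (((j : ℕ) : Fin (n+1)) : ℕ) = j := Fin.val_cast_of_lt hjN
    have hset : (Finset.univ.filter (fun i : Fin (n+1) => (i : ℕ) % t = j))
        = Finset.univ.filter (fun i => R i ((j : ℕ) : Fin (n+1))) := by
      ext i
      simp only [Finset.mem_filter, Finset.mem_univ, true_and]
      rw [Rchar, hval, Nat.mod_eq_of_lt hj]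
    rw [hset]
    exact Matom _ x hx
  · have hset : (Finset.univ.filter (fun i : Fin (n+1) => (i : ℕ) % t = j)) = ∅ := by
      apply Finset.filter_false_of_mem
      intro i _
      have := Nat.mod_lt (i : ℕ) ht0
      omega
    rw [hset, Finset.piecewise_empty]
    exact one_mem C

end Aux4
section Aux5
variable {G : Type*} [Group G] [DecidableEq G]
open Finset Function
open Fin.NatCast

/-- The position `j + t*v` in `Fin n`, `n = t*m`. -/
def gcOfPair {n t m : ℕ} (hm : n = t * m) (j : Fin t) (v : Fin m) : Fin n :=
  ⟨(j : ℕ) + t * (v : ℕ), by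
    have hj := j.isLt
    have hv := v.isLt
    have h1 : (j : ℕ) + t * (v : ℕ) < t + t * (v : ℕ) := by omega
    have h2 : t + t * (v : ℕ) = t * ((v : ℕ) + 1) := by ring
    have h3 : t * ((v : ℕ) + 1) ≤ t * m := Nat.mul_le_mul_left t hv
    omega⟩

/-- Expansion of a word of length `m` into the `j`-th residue class mod `t`. -/
def gcExpand {n t m : ℕ} (hm : n = t * m) (ht : 0 < t) (j : Fin t) :
    (Fin m → G) →* (Fin n → G) where
  toFun y := fun i => if h : (i : ℕ) % t = (j : ℕ) then
      y ⟨(i : ℕ) / t, by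
        have h2 : (i : ℕ) < t * m := by rw [← hm]; exact i.isLt
        exact Nat.div_lt_of_lt_mul h2⟩
    else 1
  map_one' := by
    funext i
    by_cases h : (i : ℕ) % t = (j : ℕ) <;> simp [h]
  map_mul' := by
    intro a b
    funext i
    by_cases h : (i : ℕ) % t = (j : ℕ) <;> simp [h]

lemma gcExpand_apply {n t m : ℕ} (hm : n = t * m) (ht : 0 < t) (j : Fin t) (y : Fin m → G)
    (i : Fin n) :
    gcExpand (G := G) hm ht j y i = if h : (i : ℕ) % t = (j : ℕ) then
      y ⟨(i : ℕ) / t, by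
        have h2 : (i : ℕ) < t * m := by rw [← hm]; exact i.isLt
        exact Nat.div_lt_of_lt_mul h2⟩
    else 1 := rfl

lemma gcExpand_comp {n t m : ℕ} (hm : n = t * m) (ht : 0 < t) (j : Fin t) (x : Fin n → G) :
    gcExpand (G := G) hm ht j (fun v => x (gcOfPair hm j v))
      = (Finset.univ.filter (fun i : Fin n => (i : ℕ) % t = (j : ℕ))).piecewise x 1 := by
  funext i
  rw [gcExpand_apply]
  by_cases h : (i : ℕ) % t = (j : ℕ)
  · rw [dif_pos h, Finset.piecewise_eq_of_mem _ _ _ (by simp [h])]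
    congr 1
    apply Fin.ext
    show (j : ℕ) + t * ((i : ℕ) / t) = (i : ℕ)
    rw [← h, Nat.mod_add_div]
  · rw [dif_neg h, Finset.piecewise_eq_of_notMem _ _ _ (by simp [h])]
    rfl

lemma gc_mem_of_comps {n t m : ℕ} (hm : n = t * m) (ht : 0 < t)
    (C : Subgroup (Fin n → G))
    (hmask : ∀ (j : ℕ), ∀ x ∈ C,
      (Finset.univ.filter (fun i : Fin n => (i : ℕ) % t = j)).piecewise x 1 ∈ C)
    (x : Fin n → G)
    (hx : ∀ j : Fin t, gcExpand (G := G) hm ht j (fun v => x (gcOfPair hm j v)) ∈ C) :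
    x ∈ C := by
  have hstep : ∀ s : ℕ, s ≤ t →
      (Finset.univ.filter (fun i : Fin n => (i : ℕ) % t < s)).piecewise x 1 ∈ C := by
    intro s
    induction s with
    | zero =>
      intro _
      have he : (Finset.univ.filter (fun i : Fin n => (i : ℕ) % t < 0)) = ∅ := by
        apply Finset.filter_false_of_mem
        intro i _
        omega
      rw [he, Finset.piecewise_empty]
      exact one_mem C
    | succ s IH =>
      intro hs
      have h1 := IH (by omega)
      have h2 := hx ⟨s, hs⟩
      rw [gcExpand_comp] at h2
      have hkey : (Finset.univ.filter (fun i : Fin n => (i : ℕ) % t < s + 1)).piecewise x 1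
          = (Finset.univ.filter (fun i : Fin n => (i : ℕ) % t < s)).piecewise x 1
            * (Finset.univ.filter (fun i : Fin n => (i : ℕ) % t
                = ((⟨s, hs⟩ : Fin t) : ℕ))).piecewise x 1 := by
        funext a
        rw [Pi.mul_apply]
        rcases Nat.lt_trichotomy ((a : ℕ) % t) s with hlt | heq | hgt
        · rw [Finset.piecewise_eq_of_mem _ _ _ (by simp; omega),
            Finset.piecewise_eq_of_mem _ _ _ (by simp [hlt]),
            Finset.piecewise_eq_of_notMem _ _ _ (by simp; omega)]
          simp
        · rw [Finset.piecewise_eq_of_mem _ _ _ (by simp; omega),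
            Finset.piecewise_eq_of_notMem _ _ _ (by simp; omega),
            Finset.piecewise_eq_of_mem _ _ _ (by simp [heq])]
          simp
        · rw [Finset.piecewise_eq_of_notMem _ _ _ (by simp; omega),
            Finset.piecewise_eq_of_notMem _ _ _ (by simp; omega),
            Finset.piecewise_eq_of_notMem _ _ _ (by simp; omega)]
          simp
      rw [hkey]
      exact mul_mem h1 h2
  have := hstep t le_rfl
  have huniv : (Finset.univ.filter (fun i : Fin n => (i : ℕ) % t < t)) = Finset.univ := by
    apply Finset.eq_univ_iff_forall.mpr
    intro i
    simp [Nat.mod_lt _ ht]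
  rwa [huniv, Finset.piecewise_univ] at this

lemma gc_comp_cyclic {n t m : ℕ} (hm : n + 1 = t * m) (ht : 0 < t)
    (C : Subgroup (Fin (n+1) → G)) (hcyc : IsCyclicGC C) (j : Fin t) :
    IsCyclicGC (C.comap (gcExpand (G := G) hm ht j)) := by
  intro y hy
  rw [Subgroup.mem_comap] at hy ⊢
  rcases Nat.lt_or_ge m 2 with hm1 | hm2
  · have hy2 : y ∘ finRotate m = y := by
      funext v
      match m, hm1, v, y with
      | 0, _, v, y => exact v.elim0
      | 1, _, v, y =>
        show y (finRotate 1 v) = y v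
        have hv : finRotate 1 v = v := Subsingleton.elim _ _
        rw [hv]
    rw [hy2]
    exact hy
  · have htn : t < n + 1 := by
      have h2 : t * 2 ≤ t * m := Nat.mul_le_mul_left t hm2
      have h3 : t * 2 ≤ n + 1 := by rw [hm]; exact h2
      omega
    have htval : ((t : Fin (n+1)) : ℕ) = t := Fin.val_cast_of_lt htn
    have key : gcExpand (G := G) hm ht j (y ∘ finRotate m)
        = fun i => (gcExpand (G := G) hm ht j y) (i + (t : Fin (n+1))) := by
      funext i
      have haddval : (i + (t : Fin (n+1))).val = ((i : ℕ) + t) % (n+1) := by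
        rw [Fin.val_add, htval]
      have hdvd : t ∣ (n + 1) := ⟨m, hm⟩
      have hmod : (((i : ℕ) + t) % (n+1)) % t = (i : ℕ) % t := by
        rw [Nat.mod_mod_of_dvd _ hdvd, Nat.add_mod_right]
      rw [gcExpand_apply, gcExpand_apply]
      by_cases h : (i : ℕ) % t = (j : ℕ)
      · rw [dif_pos h, dif_pos (by rw [haddval, hmod]; exact h)]
        show y (finRotate m _) = y _
        congr 1
        apply Fin.ext
        have hrot : ∀ v : Fin m, ((finRotate m v : Fin m) : ℕ) = ((v : ℕ) + 1) % m := by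
          intro v
          match m, hm2, v with
          | m' + 1, hm2', v =>
            rw [finRotate_succ_apply, Fin.val_add]
            congr 1
            have h9 : (1:ℕ) % (m'+1) = 1 := Nat.mod_eq_of_lt (by omega)
            rw [Fin.val_one', h9]
        rw [hrot]
        show ((i : ℕ) / t + 1) % m = (i + (t : Fin (n+1))).val / t
        rw [haddval]
        rcases Nat.lt_or_ge ((i : ℕ) + t) (n+1) with hlt | hge
        · rw [Nat.mod_eq_of_lt hlt, Nat.add_div_right _ ht]
          have hi2 : (i : ℕ) < t * (m - 1) := by
            have : (i : ℕ) + t < t * m := by rw [← hm]; exact hlt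
            have ht2 : t * m = t * (m-1) + t := by
              have h9 : m - 1 + 1 = m := by omega
              calc t * m = t * (m - 1 + 1) := by rw [h9]
                _ = t * (m-1) + t := by ring
            omega
          have hdiv : (i : ℕ) / t < m - 1 := Nat.div_lt_of_lt_mul hi2
          rw [Nat.mod_eq_of_lt (by omega)]
        · have hlt2 : (i : ℕ) + t - (n+1) < n+1 := by
            have := i.isLt
            omega
          have hmodval : ((i : ℕ) + t) % (n+1) = (i : ℕ) + t - (n+1) := by
            rw [Nat.mod_eq_sub_mod hge, Nat.mod_eq_of_lt hlt2]
          rw [hmodval]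
          have hzero : ((i : ℕ) + t - (n+1)) / t = 0 := by
            apply Nat.div_eq_of_lt
            have := i.isLt
            omega
          rw [hzero]
          have hdivtop : (i : ℕ) / t = m - 1 := by
            have hge2 : t * (m - 1) ≤ (i : ℕ) := by
              have h5 : t * m = t * (m-1) + t := by
                have h9 : m - 1 + 1 = m := by omega
                calc t * m = t * (m - 1 + 1) := by rw [h9]
                  _ = t * (m-1) + t := by ring
              have h6 : n + 1 ≤ (i : ℕ) + t := hge
              have h7 : t * m ≤ (i : ℕ) + t := by rw [← hm]; exact h6
              omega
            have hle : m - 1 ≤ (i : ℕ) / t := by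
              rw [Nat.le_div_iff_mul_le ht]
              rw [mul_comm] at hge2
              exact hge2
            have hlt3 : (i : ℕ) / t < m := by
              apply Nat.div_lt_of_lt_mul
              rw [← hm]
              exact i.isLt
            omega
          rw [hdivtop]
          have : m - 1 + 1 = m := by omega
          rw [this, Nat.mod_self]
      · rw [dif_neg h, dif_neg (by rw [haddval, hmod]; exact h)]
    rw [key]
    exact cyclic_add_closure C hcyc (t : Fin (n+1)) _ hy

end Aux5
section Aux6
open Finset Function

lemma gc_main_decomp {G : Type*} [Group G] [DecidableEq G] [Fintype G] [Nontrivial G]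
    (n : ℕ) : 0 < n → ∀ (C : Subgroup (Fin n → G)), IsCyclicGC C →
    ∃ (I : Type) (_ : Fintype I) (len : I → ℕ) (D : ∀ i : I, Subgroup (Fin (len i) → G))
      (e : (Σ i, Fin (len i)) ≃ Fin n),
      (∀ i, 0 < len i) ∧ (∀ i, IsCyclicGC (D i)) ∧ (∀ i, ¬ GCDecomposable (D i)) ∧
      ∀ x : Fin n → G, x ∈ C ↔ ∀ i, (fun u => x (e ⟨i, u⟩)) ∈ D i := by
  induction n using Nat.strong_induction_on with
  | _ n IH =>
    intro hn C hcyc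
    by_cases hdec : GCDecomposable C
    · -- decomposable case: split into mod-t components and recurse
      obtain ⟨n', rfl⟩ : ∃ n', n = n' + 1 := ⟨n - 1, by omega⟩
      obtain ⟨S0, hne, hnu, hS0⟩ := exists_splitset_of_decomposable C hdec
      obtain ⟨t, htn, ht1, hmask⟩ := exists_modclass_masks C hcyc S0 hne hnu hS0
      have ht0 : 0 < t := by omega
      set m := (n' + 1) / t with hmdef
      have hm : n' + 1 = t * m := (Nat.mul_div_cancel' htn).symm
      have hm0 : 0 < m := by
        rcases Nat.eq_zero_or_pos m with h | h
        · rw [h, mul_zero] at hm; omega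
        · exact h
      have hmn : m < n' + 1 := by
        have h2 : 2 * m ≤ t * m := Nat.mul_le_mul_right m (by omega)
        omega
      set D : Fin t → Subgroup (Fin m → G) :=
        (fun j => C.comap (gcExpand (G := G) hm ht0 j)) with hD
      have hDchar : ∀ x : Fin (n'+1) → G,
          x ∈ C ↔ ∀ j : Fin t, (fun v => x (gcOfPair hm j v)) ∈ D j := by
        intro x
        constructor
        · intro hx j
          have : gcExpand (G := G) hm ht0 j (fun v => x (gcOfPair hm j v)) ∈ C := by
            rw [gcExpand_comp]
            exact hmask (j : ℕ) x hx
          simpa [hD, Subgroup.mem_comap] using this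
        · intro h
          apply gc_mem_of_comps hm ht0 C hmask x
          intro j
          have := h j
          simpa [hD, Subgroup.mem_comap] using this
      have hDcyc : ∀ j, IsCyclicGC (D j) := fun j => gc_comp_cyclic hm ht0 C hcyc j
      have hIHall : ∀ j : Fin t, ∃ (I : Type) (_ : Fintype I) (len : I → ℕ)
          (E : ∀ i : I, Subgroup (Fin (len i) → G)) (e : (Σ i, Fin (len i)) ≃ Fin m),
          (∀ i, 0 < len i) ∧ (∀ i, IsCyclicGC (E i)) ∧ (∀ i, ¬ GCDecomposable (E i)) ∧
          ∀ y : Fin m → G, y ∈ D j ↔ ∀ i, (fun u => y (e ⟨i, u⟩)) ∈ E i :=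
        fun j => IH m hmn hm0 (D j) (hDcyc j)
      choose I instI len E e hpos hcyc' hindec hchar using hIHall
      haveI : ∀ j, Fintype (I j) := instI
      -- pair equivalence  Fin t × Fin m ≃ Fin (n'+1)
      let pairE : Fin t × Fin m ≃ Fin (n'+1) :=
        { toFun := fun p => gcOfPair hm p.1 p.2
          invFun := fun i => (⟨(i : ℕ) % t, Nat.mod_lt _ ht0⟩,
            ⟨(i : ℕ) / t, by
              apply Nat.div_lt_of_lt_mul
              rw [← hm]; exact i.isLt⟩)
          left_inv := by
            rintro ⟨j, v⟩
            have hval : ((gcOfPair hm j v : Fin (n'+1)) : ℕ) = (j : ℕ) + t * (v : ℕ) := rfl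
            rw [Prod.mk.injEq]
            constructor
            · apply Fin.ext
              show ((gcOfPair hm j v : Fin (n'+1)) : ℕ) % t = (j : ℕ)
              rw [hval, Nat.add_mul_mod_self_left, Nat.mod_eq_of_lt j.isLt]
            · apply Fin.ext
              show ((gcOfPair hm j v : Fin (n'+1)) : ℕ) / t = (v : ℕ)
              rw [hval, Nat.add_mul_div_left _ _ ht0, Nat.div_eq_of_lt j.isLt, zero_add]
          right_inv := by
            intro i
            apply Fin.ext
            show (i : ℕ) % t + t * ((i : ℕ) / t) = (i : ℕ)
            rw [Nat.mod_add_div] }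
      let bigE : (Σ p : Σ j : Fin t, I j, Fin (len p.1 p.2)) ≃ Fin (n'+1) :=
        (Equiv.sigmaAssoc fun j ij => Fin (len j ij)).trans
          ((Equiv.sigmaCongrRight fun j => e j).trans
            ((Equiv.sigmaEquivProd (Fin t) (Fin m)).trans pairE))
      refine ⟨(Σ j : Fin t, I j), inferInstance, (fun p => len p.1 p.2),
        (fun p => E p.1 p.2), bigE, fun p => hpos p.1 p.2, fun p => hcyc' p.1 p.2,
        fun p => hindec p.1 p.2, ?_⟩
      intro x
      rw [hDchar x]
      constructor
      · rintro h ⟨j, ij⟩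
        exact (hchar j _).mp (h j) ij
      · intro h j
        apply (hchar j _).mpr
        intro ij
        exact h ⟨j, ij⟩
    · -- indecomposable case
      refine ⟨PUnit, inferInstance, fun _ => n, fun _ => C,
        { toFun := fun p => p.2
          invFun := fun i => ⟨PUnit.unit, i⟩
          left_inv := by rintro ⟨⟨⟩, i⟩; rfl
          right_inv := fun i => rfl },
        fun _ => hn, fun _ => hcyc, fun _ => hdec, ?_⟩
      intro x
      exact ⟨fun hx _ => hx, fun h => h PUnit.unit⟩
end Aux6
/-- Every decomposable cyclic group code is isomorphic, as a group code,
to a direct sum of indecomposable cyclic group codes. -/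
theorem cyclic_decomposes_into_cyclic {G : Type*} [Group G] [Fintype G] [DecidableEq G]
    {n : ℕ} (hn : 0 < n) (C : Subgroup (Fin n → G)) (hcyc : IsCyclicGC C)
    (hdec : GCDecomposable C) :
    ∃ (r : ℕ) (len : Fin r → ℕ) (D : ∀ i, Subgroup (Fin (len i) → G)),
      (∀ i, 0 < len i) ∧ (∀ i, IsCyclicGC (D i)) ∧ (∀ i, ¬ GCDecomposable (D i)) ∧
        GroupCodeIso C (gcMultiSum D) := by
  rcases subsingleton_or_nontrivial G with hG | hG
  · -- trivial alphabet: the empty direct sum works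
    refine ⟨0, Fin.elim0, fun i => i.elim0, fun i => i.elim0, fun i => i.elim0,
      fun i => i.elim0, ?_⟩
    refine ⟨fun _ => 1, fun _ => 1,
      ⟨fun x y => (one_mul (1 : Fin _ → G)).symm, fun x _ => one_mem _,
        fun x y => by rw [hammingDist_self]; exact Nat.zero_le _⟩,
      ⟨fun x y => (one_mul (1 : Fin n → G)).symm, fun x _ => one_mem _,
        fun x y => by rw [hammingDist_self]; exact Nat.zero_le _⟩,
      fun x => funext fun i => Subsingleton.elim _ _,
      fun y => funext fun i => Subsingleton.elim _ _⟩
  · obtain ⟨I, instI, len, D, e, hpos, hcyc', hindec, hchar⟩ :=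
      gc_main_decomp n hn C hcyc
    haveI := instI
    refine ⟨Fintype.card I, fun s => len ((Fintype.equivFin I).symm s),
      fun s => D ((Fintype.equivFin I).symm s), fun s => hpos _, fun s => hcyc' _,
      fun s => hindec _, ?_⟩
    -- ambient reindexing equivalence
    let e2 : (Σ s : Fin (Fintype.card I), Fin (len ((Fintype.equivFin I).symm s))) ≃ Fin n :=
      (Equiv.sigmaCongrLeft (β := fun i => Fin (len i)) (Fintype.equivFin I).symm).trans e
    apply groupCodeIso_of_char (E := finPosEquiv.symm.trans e2)
    intro x
    have hE : ∀ (s : Fin (Fintype.card I)) (u : Fin (len ((Fintype.equivFin I).symm s))),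
        (finPosEquiv.symm.trans e2) (finPos s u) = e ⟨(Fintype.equivFin I).symm s, u⟩ := by
      intro s u
      show e2 (finPosEquiv.symm (finPos s u)) = _
      rw [finPosEquiv_symm_finPos]
      rfl
    calc x ∈ C ↔ ∀ i, (fun u => x (e ⟨i, u⟩)) ∈ D i := hchar x
      _ ↔ ∀ s, (fun u => x (e ⟨(Fintype.equivFin I).symm s, u⟩))
            ∈ D ((Fintype.equivFin I).symm s) :=
        Equiv.forall_congr_left (Fintype.equivFin I)
      _ ↔ ∀ s, (fun u => (x ∘ (finPosEquiv.symm.trans e2)) (finPos s u))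
            ∈ D ((Fintype.equivFin I).symm s) := by
        apply forall_congr'
        intro s
        have heq : (fun u => x (e ⟨(Fintype.equivFin I).symm s, u⟩))
            = fun u => (x ∘ (finPosEquiv.symm.trans e2)) (finPos s u) := by
          funext u
          exact (congrArg x (hE s u)).symm
        rw [heq]
      _ ↔ (x ∘ (finPosEquiv.symm.trans e2)) ∈
            gcMultiSum (fun s => D ((Fintype.equivFin I).symm s)) :=
        (mem_gcMultiSum_iff _ _).symm
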